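/- (Energy rate identity for the advection semi-discretization, from the proof of Theorem 3) Suppose that in the SBP-FD junction semi-discretization of the advection equation the operators I_w^w, I_u^u, I_v^v are identity matrices, while a_1, a_2, τ_w, τ_{uv} ∈ ℝ and the interpolation matrices I_w^u, I_w^v, I^{w,u}, I^{w,v} are arbitrary. Let w, u, v be differentiable functions satisfying the semi-discrete system for all t ≥ 0, and define the interface traces w_0(t) = (I_{x,w}⊗e_{0,w}^T) w(t) ∈ ℝ^{n_{x,w}}, u_N(t) = (I_{x,u}⊗e_{N,u}^T) u(t) ∈ ℝ^{n_{x,u}}, v_N(t) = (I_{x,v}⊗e_{N,v}^T) v(t) ∈ ℝ^{n_{x,v}}. Then for all t ≥ 0: d/dt [‖w(t)‖²_{P_w} + ‖u(t)‖²_{P_u} + ‖v(t)‖²_{P_v}] = (−a_2 − 2τ_w) w_0^T P_{x,w} w_0 + (a_2 − 2τ_{uv}) (u_N^T P_{x,u} u_N + v_N^T P_{x,v} v_N) + 2τ_w w_0^T P_{x,w} (I^{w,u} u_N + I^{w,v} v_N) + 2τ_{uv} (u_N^T P_{x,u} I_w^u w_0 + v_N^T P_{x,v} I_w^v w_0). 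-/

import Mathlib

open Matrix
open scoped Kronecker

noncomputable section

/-- The first standard basis vector `e₀ = (1,0,…,0)ᵀ` of `ℝ^(l+1)`. -/
def e0v (l : ℕ) : Fin (l + 1) → ℝ := Pi.single 0 1

/-- The last standard basis vector `e_N = (0,…,0,1)ᵀ` of `ℝ^(l+1)`. -/
def eNv (l : ℕ) : Fin (l + 1) → ℝ := Pi.single (Fin.last l) 1

/-- The SBP energy `‖f‖²_P = fᵀ (Px ⊗ Py) f` of a real grid function. -/
def energyR {a b : Type*} [Fintype a] [Fintype b]
    (Px : Matrix a a ℝ) (Py : Matrix b b ℝ) (f : a × b → ℝ) : ℝ :=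
  dotProduct f ((Px ⊗ₖ Py).mulVec f)

/-- The interface trace `(I_x ⊗ e₀ᵀ) f` of a grid function. -/
def trace0 {a : Type*} {l : ℕ} (f : a × Fin (l + 1) → ℝ) : a → ℝ :=
  fun i => ∑ j, e0v l j * f (i, j)

/-- The interface trace `(I_x ⊗ e_Nᵀ) f` of a grid function. -/
def traceN {a : Type*} {l : ℕ} (f : a × Fin (l + 1) → ℝ) : a → ℝ :=
  fun i => ∑ j, eNv l j * f (i, j)

/-
Energy method. For a symmetric norm matrix `H = P_x ⊗ P_y`, the energy `fᵀ H f` has derivative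
`2 fᵀ H f'`. The SBP property makes `H (D_x ⊗ I) = Q_x ⊗ P_y` skew-symmetric, so the
`x`-derivative contributes nothing, while `H (I ⊗ D_y) = P_x ⊗ Q_y` has symmetric part
`±½ P_x ⊗ e eᵀ`, leaving `± a₂` times the quadratic form of the interface trace. Since
`H (I ⊗ P_y⁻¹) = P_x ⊗ I`, every penalty term `(B ⊗ p qᵀ)` pairs with `f` to
`(I ⊗ pᵀ) f ⬝ P_x B (I ⊗ qᵀ) g`, a form in the traces alone.
-/

section Algebra

variable {R : Type*} [CommRing R] {a b c d : Type*} [Fintype a] [Fintype b] [Fintype c]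
  [Fintype d]

-- `traceAlong p f = (I ⊗ pᵀ) f`
def traceAlong (p : b → R) (f : a × b → R) : a → R := fun i => ∑ j, p j * f (i, j)

theorem dotProduct_kronecker_vecMulVec_mulVec (B : Matrix a c R) (p : b → R) (q : d → R)
    (f : a × b → R) (g : c × d → R) :
    f ⬝ᵥ (B ⊗ₖ vecMulVec p q) *ᵥ g = traceAlong p f ⬝ᵥ B *ᵥ traceAlong q g := by
  simp only [traceAlong, dotProduct, mulVec, kroneckerMap_apply, vecMulVec_apply,
    Fintype.sum_prod_type, Finset.sum_mul, Finset.mul_sum]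
  refine Finset.sum_congr rfl fun i _ => ?_
  rw [Finset.sum_comm]
  refine Finset.sum_congr rfl fun i' _ => ?_
  rw [Finset.sum_comm]
  exact Finset.sum_congr rfl fun j _ => Finset.sum_congr rfl fun j' _ => by ring

theorem dotProduct_add_transpose_mulVec (A : Matrix a a R) (x : a → R) :
    x ⬝ᵥ (A + Aᵀ) *ᵥ x = 2 * (x ⬝ᵥ A *ᵥ x) := by
  rw [add_mulVec, dotProduct_add, mulVec_transpose, dotProduct_comm x (x ᵥ* A),
    ← dotProduct_mulVec]
  ring

theorem two_mul_dotProduct_kronecker_mulVec_advection [DecidableEq a] [DecidableEq b]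
    (a1 a2 s : R) {Px Qx : Matrix a a R} {Py Qy : Matrix b b R} {p : b → R}
    (hPx : Px * Px⁻¹ = 1) (hPy : Py * Py⁻¹ = 1) (hPxs : Pxᵀ = Px) (hPys : Pyᵀ = Py)
    (hQx : Qx + Qxᵀ = 0) (hQy : Qy + Qyᵀ = s • vecMulVec p p) (f : a × b → R) :
    2 * (f ⬝ᵥ (Px ⊗ₖ Py) *ᵥ (a1 • ((Px⁻¹ * Qx) ⊗ₖ 1) + a2 • (1 ⊗ₖ (Py⁻¹ * Qy))) *ᵥ f)
      = a2 * s * (traceAlong p f ⬝ᵥ Px *ᵥ traceAlong p f) := by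
  have hx : (Px ⊗ₖ Py) * ((Px⁻¹ * Qx) ⊗ₖ 1) = Qx ⊗ₖ Py := by
    rw [← mul_kronecker_mul, ← Matrix.mul_assoc, hPx, Matrix.one_mul, Matrix.mul_one]
  have hy : (Px ⊗ₖ Py) * (1 ⊗ₖ (Py⁻¹ * Qy)) = Px ⊗ₖ Qy := by
    rw [← mul_kronecker_mul, ← Matrix.mul_assoc, hPy, Matrix.one_mul, Matrix.mul_one]
  have hskew : 2 * (f ⬝ᵥ (Qx ⊗ₖ Py) *ᵥ f) = 0 := by
    rw [← dotProduct_add_transpose_mulVec, ← kroneckerMap_transpose, hPys, ← add_kronecker, hQx,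
      zero_kronecker, zero_mulVec, dotProduct_zero]
  have hbdry : 2 * (f ⬝ᵥ (Px ⊗ₖ Qy) *ᵥ f) = s * (traceAlong p f ⬝ᵥ Px *ᵥ traceAlong p f) := by
    rw [← dotProduct_add_transpose_mulVec, ← kroneckerMap_transpose, hPxs, ← kronecker_add, hQy,
      kronecker_smul, smul_mulVec, dotProduct_smul, smul_eq_mul,
      dotProduct_kronecker_vecMulVec_mulVec]
  rw [mulVec_mulVec, Matrix.mul_add, Matrix.mul_smul, Matrix.mul_smul, hx, hy, add_mulVec,
    smul_mulVec, smul_mulVec, dotProduct_add, dotProduct_smul, dotProduct_smul, smul_eq_mul,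
    smul_eq_mul]
  linear_combination a1 * hskew + a2 * hbdry

end Algebra

section Calculus

variable {𝕜 : Type*} [NontriviallyNormedField 𝕜] {m n : Type*} [Fintype n]
  {f g : 𝕜 → n → 𝕜} {f' g' : n → 𝕜} {t : 𝕜}

theorem hasDerivAt_dotProduct (hf : HasDerivAt f f' t) (hg : HasDerivAt g g' t) :
    HasDerivAt (fun s => f s ⬝ᵥ g s) (f' ⬝ᵥ g t + f t ⬝ᵥ g') t := by
  simpa only [dotProduct, Finset.sum_add_distrib] using
    HasDerivAt.fun_sum (u := Finset.univ) fun i _ =>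
      (hasDerivAt_pi.1 hf i).fun_mul (hasDerivAt_pi.1 hg i)

theorem hasDerivAt_mulVec (M : Matrix m n 𝕜) (hf : HasDerivAt f f' t) :
    HasDerivAt (fun s => M *ᵥ f s) (M *ᵥ f') t :=
  hasDerivAt_pi.2 fun i => by
    simpa only [mulVec, dotProduct] using
      HasDerivAt.fun_sum (u := Finset.univ) fun j _ => (hasDerivAt_pi.1 hf j).const_mul (M i j)

theorem hasDerivAt_dotProduct_mulVec_self {M : Matrix n n 𝕜} (hM : Mᵀ = M)
    (hf : HasDerivAt f f' t) :
    HasDerivAt (fun s => f s ⬝ᵥ M *ᵥ f s) (2 * (f t ⬝ᵥ M *ᵥ f')) t := by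
  convert hasDerivAt_dotProduct hf (hasDerivAt_mulVec M hf) using 1
  rw [dotProduct_mulVec, ← mulVec_transpose, hM, dotProduct_comm]
  ring

end Calculus

theorem Matrix.PosDef.transpose_eq {n : Type*} [Fintype n] {P : Matrix n n ℝ} (hP : P.PosDef) :
    Pᵀ = P :=
  isHermitian_iff_isSymm.1 hP.isHermitian

theorem Matrix.PosDef.mul_inv_eq_one {n : Type*} [Fintype n] [DecidableEq n]
    {P : Matrix n n ℝ} (hP : P.PosDef) : P * P⁻¹ = 1 :=
  mul_nonsing_inv P ((isUnit_iff_isUnit_det P).1 hP.isUnit)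

theorem hasDerivAt_energyR_advection_sat {a b : Type*} [Fintype a] [Fintype b] [DecidableEq a]
    [DecidableEq b] (a1 a2 s τ : ℝ) {Px Qx : Matrix a a ℝ} {Py Qy : Matrix b b ℝ} {p : b → ℝ}
    (hPx : Px.PosDef) (hPy : Py.PosDef) (hQx : Qx + Qxᵀ = 0)
    (hQy : Qy + Qyᵀ = s • vecMulVec p p) {f : ℝ → a × b → ℝ} {r : a × b → ℝ} {t : ℝ}
    (hf : HasDerivAt f ((a1 • ((Px⁻¹ * Qx) ⊗ₖ 1) + a2 • (1 ⊗ₖ (Py⁻¹ * Qy))) *ᵥ f t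
      - τ • (1 ⊗ₖ Py⁻¹) *ᵥ r) t) :
    HasDerivAt (fun x => energyR Px Py (f x))
      (a2 * s * (traceAlong p (f t) ⬝ᵥ Px *ᵥ traceAlong p (f t))
        - 2 * τ * (f t ⬝ᵥ (Px ⊗ₖ 1) *ᵥ r)) t := by
  have hsymm : (Px ⊗ₖ Py)ᵀ = Px ⊗ₖ Py := by
    rw [← kroneckerMap_transpose, hPx.transpose_eq, hPy.transpose_eq]
  have hsat : (Px ⊗ₖ Py) * (1 ⊗ₖ Py⁻¹) = Px ⊗ₖ 1 := by
    rw [← mul_kronecker_mul, Matrix.mul_one, hPy.mul_inv_eq_one]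
  refine (hasDerivAt_dotProduct_mulVec_self hsymm hf).congr_deriv ?_
  rw [mulVec_sub, dotProduct_sub, mulVec_smul, dotProduct_smul, smul_eq_mul, mulVec_mulVec r,
    hsat, mul_sub, two_mul_dotProduct_kronecker_mulVec_advection a1 a2 s hPx.mul_inv_eq_one
      hPy.mul_inv_eq_one hPx.transpose_eq hPy.transpose_eq hQx hQy]
  ring

theorem trace0_eq_traceAlong {a : Type*} {l : ℕ} (f : a × Fin (l + 1) → ℝ) :
    trace0 f = traceAlong (e0v l) f :=
  rfl

theorem traceN_eq_traceAlong {a : Type*} {l : ℕ} (f : a × Fin (l + 1) → ℝ) :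
    traceN f = traceAlong (eNv l) f :=
  rfl

theorem sbp_fd_junction_advection_energy_rate_general
    (kw lw ku lu kv lv : ℕ) (a1 a2 : ℝ)
    (Pxw : Matrix (Fin (kw + 1)) (Fin (kw + 1)) ℝ)
    (Pyw : Matrix (Fin (lw + 1)) (Fin (lw + 1)) ℝ)
    (Pxu : Matrix (Fin (ku + 1)) (Fin (ku + 1)) ℝ)
    (Pyu : Matrix (Fin (lu + 1)) (Fin (lu + 1)) ℝ)
    (Pxv : Matrix (Fin (kv + 1)) (Fin (kv + 1)) ℝ)
    (Pyv : Matrix (Fin (lv + 1)) (Fin (lv + 1)) ℝ)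
    (hPxwP : Pxw.PosDef)
    (hPywP : Pyw.PosDef)
    (hPxuP : Pxu.PosDef)
    (hPyuP : Pyu.PosDef)
    (hPxvP : Pxv.PosDef)
    (hPyvP : Pyv.PosDef)
    (Qxw : Matrix (Fin (kw + 1)) (Fin (kw + 1)) ℝ)
    (Qyw : Matrix (Fin (lw + 1)) (Fin (lw + 1)) ℝ)
    (Qxu : Matrix (Fin (ku + 1)) (Fin (ku + 1)) ℝ)
    (Qyu : Matrix (Fin (lu + 1)) (Fin (lu + 1)) ℝ)
    (Qxv : Matrix (Fin (kv + 1)) (Fin (kv + 1)) ℝ)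
    (Qyv : Matrix (Fin (lv + 1)) (Fin (lv + 1)) ℝ)
    (hQxw : Qxw + Qxwᵀ = 0) (hQxu : Qxu + Qxuᵀ = 0) (hQxv : Qxv + Qxvᵀ = 0)
    (hQyw : Qyw + Qywᵀ = -vecMulVec (e0v lw) (e0v lw))
    (hQyu : Qyu + Qyuᵀ = vecMulVec (eNv lu) (eNv lu))
    (hQyv : Qyv + Qyvᵀ = vecMulVec (eNv lv) (eNv lv))
    (Iww : Matrix (Fin (kw + 1)) (Fin (kw + 1)) ℝ)
    (Iuu : Matrix (Fin (ku + 1)) (Fin (ku + 1)) ℝ)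
    (Ivv : Matrix (Fin (kv + 1)) (Fin (kv + 1)) ℝ)
    (hIww : Iww = 1) (hIuu : Iuu = 1) (hIvv : Ivv = 1)
    (Iwu : Matrix (Fin (ku + 1)) (Fin (kw + 1)) ℝ)
    (Iwv : Matrix (Fin (kv + 1)) (Fin (kw + 1)) ℝ)
    (Iwu' : Matrix (Fin (kw + 1)) (Fin (ku + 1)) ℝ)
    (Iwv' : Matrix (Fin (kw + 1)) (Fin (kv + 1)) ℝ)
    (τw τuv : ℝ)
    (w : ℝ → (Fin (kw + 1) × Fin (lw + 1) → ℝ))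
    (u : ℝ → (Fin (ku + 1) × Fin (lu + 1) → ℝ))
    (v : ℝ → (Fin (kv + 1) × Fin (lv + 1) → ℝ))
    (hw : ∀ t : ℝ, 0 ≤ t → HasDerivAt w
      ((a1 • ((Pxw⁻¹ * Qxw) ⊗ₖ (1 : Matrix (Fin (lw + 1)) (Fin (lw + 1)) ℝ))
          + a2 • ((1 : Matrix (Fin (kw + 1)) (Fin (kw + 1)) ℝ) ⊗ₖ (Pyw⁻¹ * Qyw))).mulVec (w t)
        - τw • ((1 : Matrix (Fin (kw + 1)) (Fin (kw + 1)) ℝ) ⊗ₖ Pyw⁻¹).mulVec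
            ((Iww ⊗ₖ vecMulVec (e0v lw) (e0v lw)).mulVec (w t)
              - (Iwu' ⊗ₖ vecMulVec (e0v lw) (eNv lu)).mulVec (u t)
              - (Iwv' ⊗ₖ vecMulVec (e0v lw) (eNv lv)).mulVec (v t))) t)
    (hu : ∀ t : ℝ, 0 ≤ t → HasDerivAt u
      ((a1 • ((Pxu⁻¹ * Qxu) ⊗ₖ (1 : Matrix (Fin (lu + 1)) (Fin (lu + 1)) ℝ))
          + a2 • ((1 : Matrix (Fin (ku + 1)) (Fin (ku + 1)) ℝ) ⊗ₖ (Pyu⁻¹ * Qyu))).mulVec (u t)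
        - τuv • ((1 : Matrix (Fin (ku + 1)) (Fin (ku + 1)) ℝ) ⊗ₖ Pyu⁻¹).mulVec
            ((Iuu ⊗ₖ vecMulVec (eNv lu) (eNv lu)).mulVec (u t)
              - (Iwu ⊗ₖ vecMulVec (eNv lu) (e0v lw)).mulVec (w t))) t)
    (hv : ∀ t : ℝ, 0 ≤ t → HasDerivAt v
      ((a1 • ((Pxv⁻¹ * Qxv) ⊗ₖ (1 : Matrix (Fin (lv + 1)) (Fin (lv + 1)) ℝ))
          + a2 • ((1 : Matrix (Fin (kv + 1)) (Fin (kv + 1)) ℝ) ⊗ₖ (Pyv⁻¹ * Qyv))).mulVec (v t)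
        - τuv • ((1 : Matrix (Fin (kv + 1)) (Fin (kv + 1)) ℝ) ⊗ₖ Pyv⁻¹).mulVec
            ((Ivv ⊗ₖ vecMulVec (eNv lv) (eNv lv)).mulVec (v t)
              - (Iwv ⊗ₖ vecMulVec (eNv lv) (e0v lw)).mulVec (w t))) t) :
    ∀ t : ℝ, 0 ≤ t →
      HasDerivAt
        (fun s => energyR Pxw Pyw (w s) + energyR Pxu Pyu (u s) + energyR Pxv Pyv (v s))
        ((-a2 - 2 * τw) * dotProduct (trace0 (w t)) (Pxw.mulVec (trace0 (w t)))
          + (a2 - 2 * τuv) *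
              (dotProduct (traceN (u t)) (Pxu.mulVec (traceN (u t)))
                + dotProduct (traceN (v t)) (Pxv.mulVec (traceN (v t))))
          + 2 * τw *
              dotProduct (trace0 (w t))
                (Pxw.mulVec (Iwu'.mulVec (traceN (u t)) + Iwv'.mulVec (traceN (v t))))
          + 2 * τuv *
              (dotProduct (traceN (u t)) (Pxu.mulVec (Iwu.mulVec (trace0 (w t))))
                + dotProduct (traceN (v t)) (Pxv.mulVec (Iwv.mulVec (trace0 (w t))))))
        t := by
  intro t ht
  subst hIww hIuu hIvv
  have hw' := hasDerivAt_energyR_advection_sat a1 a2 (-1) τw hPxwP hPywP hQxw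
    (by rw [hQyw, neg_one_smul]) (hw t ht)
  have hu' := hasDerivAt_energyR_advection_sat a1 a2 1 τuv hPxuP hPyuP hQxu
    (by rw [hQyu, one_smul]) (hu t ht)
  have hv' := hasDerivAt_energyR_advection_sat a1 a2 1 τuv hPxvP hPyvP hQxv
    (by rw [hQyv, one_smul]) (hv t ht)
  refine ((hw'.add hu').add hv').congr_deriv ?_
  simp only [mulVec_sub, dotProduct_sub, mulVec_mulVec, ← mul_kronecker_mul, Matrix.mul_one,
    Matrix.one_mul, dotProduct_kronecker_vecMulVec_mulVec, trace0_eq_traceAlong,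
    traceN_eq_traceAlong, mulVec_add, dotProduct_add]
  ring

/-- (Energy rate identity for the advection semi-discretization, from the proof of
Theorem 3.) With identity operators `I_w^w, I_u^u, I_v^v` and arbitrary penalty
parameters and interpolation matrices, the time derivative of the discrete energy
equals the stated quadratic form in the interface traces. -/
theorem sbp_fd_junction_advection_energy_rate
    (kw lw ku lu kv lv : ℕ) (a1 a2 : ℝ)
    (Pxw : Matrix (Fin (kw + 1)) (Fin (kw + 1)) ℝ)
    (Pyw : Matrix (Fin (lw + 1)) (Fin (lw + 1)) ℝ)
    (Pxu : Matrix (Fin (ku + 1)) (Fin (ku + 1)) ℝ)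
    (Pyu : Matrix (Fin (lu + 1)) (Fin (lu + 1)) ℝ)
    (Pxv : Matrix (Fin (kv + 1)) (Fin (kv + 1)) ℝ)
    (Pyv : Matrix (Fin (lv + 1)) (Fin (lv + 1)) ℝ)
    (hPxw : Pxw.IsDiag) (hPxwP : Pxw.PosDef)
    (hPyw : Pyw.IsDiag) (hPywP : Pyw.PosDef)
    (hPxu : Pxu.IsDiag) (hPxuP : Pxu.PosDef)
    (hPyu : Pyu.IsDiag) (hPyuP : Pyu.PosDef)
    (hPxv : Pxv.IsDiag) (hPxvP : Pxv.PosDef)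
    (hPyv : Pyv.IsDiag) (hPyvP : Pyv.PosDef)
    (Qxw : Matrix (Fin (kw + 1)) (Fin (kw + 1)) ℝ)
    (Qyw : Matrix (Fin (lw + 1)) (Fin (lw + 1)) ℝ)
    (Qxu : Matrix (Fin (ku + 1)) (Fin (ku + 1)) ℝ)
    (Qyu : Matrix (Fin (lu + 1)) (Fin (lu + 1)) ℝ)
    (Qxv : Matrix (Fin (kv + 1)) (Fin (kv + 1)) ℝ)
    (Qyv : Matrix (Fin (lv + 1)) (Fin (lv + 1)) ℝ)
    (hQxw : Qxw + Qxwᵀ = 0) (hQxu : Qxu + Qxuᵀ = 0) (hQxv : Qxv + Qxvᵀ = 0)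
    (hQyw : Qyw + Qywᵀ = -vecMulVec (e0v lw) (e0v lw))
    (hQyu : Qyu + Qyuᵀ = vecMulVec (eNv lu) (eNv lu))
    (hQyv : Qyv + Qyvᵀ = vecMulVec (eNv lv) (eNv lv))
    (Iww : Matrix (Fin (kw + 1)) (Fin (kw + 1)) ℝ)
    (Iuu : Matrix (Fin (ku + 1)) (Fin (ku + 1)) ℝ)
    (Ivv : Matrix (Fin (kv + 1)) (Fin (kv + 1)) ℝ)
    (hIww : Iww = 1) (hIuu : Iuu = 1) (hIvv : Ivv = 1)
    (Iwu : Matrix (Fin (ku + 1)) (Fin (kw + 1)) ℝ)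
    (Iwv : Matrix (Fin (kv + 1)) (Fin (kw + 1)) ℝ)
    (Iwu' : Matrix (Fin (kw + 1)) (Fin (ku + 1)) ℝ)
    (Iwv' : Matrix (Fin (kw + 1)) (Fin (kv + 1)) ℝ)
    (τw τuv : ℝ)
    (w : ℝ → (Fin (kw + 1) × Fin (lw + 1) → ℝ))
    (u : ℝ → (Fin (ku + 1) × Fin (lu + 1) → ℝ))
    (v : ℝ → (Fin (kv + 1) × Fin (lv + 1) → ℝ))
    (hw : ∀ t : ℝ, 0 ≤ t → HasDerivAt w
      ((a1 • ((Pxw⁻¹ * Qxw) ⊗ₖ (1 : Matrix (Fin (lw + 1)) (Fin (lw + 1)) ℝ))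
          + a2 • ((1 : Matrix (Fin (kw + 1)) (Fin (kw + 1)) ℝ) ⊗ₖ (Pyw⁻¹ * Qyw))).mulVec (w t)
        - τw • ((1 : Matrix (Fin (kw + 1)) (Fin (kw + 1)) ℝ) ⊗ₖ Pyw⁻¹).mulVec
            ((Iww ⊗ₖ vecMulVec (e0v lw) (e0v lw)).mulVec (w t)
              - (Iwu' ⊗ₖ vecMulVec (e0v lw) (eNv lu)).mulVec (u t)
              - (Iwv' ⊗ₖ vecMulVec (e0v lw) (eNv lv)).mulVec (v t))) t)
    (hu : ∀ t : ℝ, 0 ≤ t → HasDerivAt u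
      ((a1 • ((Pxu⁻¹ * Qxu) ⊗ₖ (1 : Matrix (Fin (lu + 1)) (Fin (lu + 1)) ℝ))
          + a2 • ((1 : Matrix (Fin (ku + 1)) (Fin (ku + 1)) ℝ) ⊗ₖ (Pyu⁻¹ * Qyu))).mulVec (u t)
        - τuv • ((1 : Matrix (Fin (ku + 1)) (Fin (ku + 1)) ℝ) ⊗ₖ Pyu⁻¹).mulVec
            ((Iuu ⊗ₖ vecMulVec (eNv lu) (eNv lu)).mulVec (u t)
              - (Iwu ⊗ₖ vecMulVec (eNv lu) (e0v lw)).mulVec (w t))) t)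
    (hv : ∀ t : ℝ, 0 ≤ t → HasDerivAt v
      ((a1 • ((Pxv⁻¹ * Qxv) ⊗ₖ (1 : Matrix (Fin (lv + 1)) (Fin (lv + 1)) ℝ))
          + a2 • ((1 : Matrix (Fin (kv + 1)) (Fin (kv + 1)) ℝ) ⊗ₖ (Pyv⁻¹ * Qyv))).mulVec (v t)
        - τuv • ((1 : Matrix (Fin (kv + 1)) (Fin (kv + 1)) ℝ) ⊗ₖ Pyv⁻¹).mulVec
            ((Ivv ⊗ₖ vecMulVec (eNv lv) (eNv lv)).mulVec (v t)
              - (Iwv ⊗ₖ vecMulVec (eNv lv) (e0v lw)).mulVec (w t))) t) :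
    ∀ t : ℝ, 0 ≤ t →
      HasDerivAt
        (fun s => energyR Pxw Pyw (w s) + energyR Pxu Pyu (u s) + energyR Pxv Pyv (v s))
        ((-a2 - 2 * τw) * dotProduct (trace0 (w t)) (Pxw.mulVec (trace0 (w t)))
          + (a2 - 2 * τuv) *
              (dotProduct (traceN (u t)) (Pxu.mulVec (traceN (u t)))
                + dotProduct (traceN (v t)) (Pxv.mulVec (traceN (v t))))
          + 2 * τw *
              dotProduct (trace0 (w t))
                (Pxw.mulVec (Iwu'.mulVec (traceN (u t)) + Iwv'.mulVec (traceN (v t))))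
          + 2 * τuv *
              (dotProduct (traceN (u t)) (Pxu.mulVec (Iwu.mulVec (trace0 (w t))))
                + dotProduct (traceN (v t)) (Pxv.mulVec (Iwv.mulVec (trace0 (w t))))))
        t :=
  sbp_fd_junction_advection_energy_rate_general kw lw ku lu kv lv a1 a2 Pxw Pyw Pxu Pyu Pxv Pyv
    hPxwP hPywP hPxuP hPyuP hPxvP hPyvP Qxw Qyw Qxu Qyu Qxv Qyv hQxw hQxu hQxv hQyw hQyu hQyv Iww
    Iuu Ivv hIww hIuu hIvv Iwu Iwv Iwu' Iwv' τw τuv w u v hw hu hv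

end
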